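/- (Abstract core of the properly-virtual criterion.) Let f be a pseudo-adequate loop-count function on states of n crossings, and let f′ be a pseudo-adequate loop-count function on states of n + 1 crossings, such that f′(s_A′) = f(s_A) + 1 and f′(s_B′) = f(s_B) + 1 (where s_A, s_B and s_A′, s_B′ are the constant-false and constant-true states for n and n + 1 crossings respectively; this models obtaining one diagram from the other by virtualizing a single real crossing). Then span ⟨f′⟩ = span ⟨f⟩ + 6; in particular, span ⟨f⟩ and span ⟨f′⟩ are not both divisible by 4. -/

import Mathlib

open LaurentPolynomial

/-- Maximal degree (max of the support), with convention `odeg 0 = 0`. -/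
noncomputable def odeg (g : LaurentPolynomial ℤ) : ℤ := g.coeff.support.max.unbotD 0

/-- Minimal degree (min of the support), with convention `udeg 0 = 0`. -/
noncomputable def udeg (g : LaurentPolynomial ℤ) : ℤ := g.coeff.support.min.untopD 0

/-- The span of a Laurent polynomial. -/
noncomputable def lspan (g : LaurentPolynomial ℤ) : ℤ := odeg g - udeg g

/-- Number of crossings spliced by an A-splice in the state `s`. -/
def alpha {n : ℕ} (s : Fin n → Bool) : ℕ :=
  (Finset.univ.filter (fun i => s i = false)).card

/-- Number of crossings spliced by a B-splice in the state `s`. -/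
def beta {n : ℕ} (s : Fin n → Bool) : ℕ :=
  (Finset.univ.filter (fun i => s i = true)).card

/-- A loop-count function: at least one loop in every state, and changing the
splice at one crossing changes the number of loops by at most one. -/
def IsLoopCount {n : ℕ} (f : (Fin n → Bool) → ℕ) : Prop :=
  (∀ s, 1 ≤ f s) ∧
    ∀ (s : Fin n → Bool) (i : Fin n),
      |(f (Function.update s i (!(s i))) : ℤ) - (f s : ℤ)| ≤ 1

/-- The weight `A^(α(s)-β(s)) * (-A^2 - A^(-2))^(f(s)-1)` of a state `s`. -/
noncomputable def weight {n : ℕ} (f : (Fin n → Bool) → ℕ) (s : Fin n → Bool) :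
    LaurentPolynomial ℤ :=
  T ((alpha s : ℤ) - (beta s : ℤ)) * (-T 2 - T (-2)) ^ (f s - 1)

/-- The Kauffman bracket of a loop-count function: the sum of the weights. -/
noncomputable def bracket {n : ℕ} (f : (Fin n → Bool) → ℕ) : LaurentPolynomial ℤ :=
  ∑ s : Fin n → Bool, weight f s

/-! The weight of a state `s` has its top coefficient `±1` in degree `α(s) - β(s) + 2 f(s) - 2`.
Changing one splice from A to B lowers `α - β` by 2 and raises `f` by at most 1, and by
pseudo-adequacy the first such change away from `s_A` does not raise `f` at all. Hence every state
other than `s_A` has its top degree strictly below that of `s_A`, which is `n + 2 f(s_A) - 2`, so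
no cancellation happens there; symmetrically the lowest degree of `⟨f⟩` is `-n - 2 f(s_B) + 2`.
So `span ⟨f⟩ = 2n + 2 f(s_A) + 2 f(s_B) - 4`, and virtualizing a crossing raises each of `n`,
`f(s_A)`, `f(s_B)` by one. -/

open Function

local notation "δ" => (-T 2 - T (-2) : LaurentPolynomial ℤ)

namespace LaurentPolynomial

variable {R : Type*} [Semiring R]

lemma coeff_T_mul (m : ℤ) (p : R[T;T⁻¹]) (j : ℤ) : (T m * p).coeff j = p.coeff (j - m) := by
  rw [T, AddMonoidAlgebra.coeff_single_mul_apply, one_mul, neg_add_eq_sub]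

lemma coeff_mul_T (p : R[T;T⁻¹]) (m j : ℤ) : (p * T m).coeff j = p.coeff (j - m) := by
  rw [T, AddMonoidAlgebra.coeff_mul_single_apply, mul_one, sub_eq_add_neg]

end LaurentPolynomial

lemma odeg_eq_of_coeff {p : LaurentPolynomial ℤ} {d : ℤ} (hd : p.coeff d ≠ 0)
    (h : ∀ j, d < j → p.coeff j = 0) : odeg p = d := by
  have hmax : p.coeff.support.max = d := by
    refine le_antisymm (Finset.max_le fun j hj => WithBot.coe_le_coe.2 ?_)
      (Finset.le_max (Finsupp.mem_support_iff.2 hd))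
    by_contra! hlt
    exact Finsupp.mem_support_iff.1 hj (h j hlt)
  rw [odeg, hmax, WithBot.unbotD_coe]

lemma udeg_eq_of_coeff {p : LaurentPolynomial ℤ} {d : ℤ} (hd : p.coeff d ≠ 0)
    (h : ∀ j, j < d → p.coeff j = 0) : udeg p = d := by
  have hmin : p.coeff.support.min = d := by
    refine le_antisymm (Finset.min_le (Finsupp.mem_support_iff.2 hd))
      (Finset.le_min fun j hj => WithTop.coe_le_coe.2 ?_)
    by_contra! hlt
    exact Finsupp.mem_support_iff.1 hj (h j hlt)
  rw [udeg, hmin, WithTop.untopD_coe]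

section Sum

variable {ι : Type*} [Fintype ι] (p : ι → LaurentPolynomial ℤ) (d : ι → ℤ) {i₀ : ι}

lemma odeg_sum_eq (hp : ∀ i j, d i < j → (p i).coeff j = 0) (hd : ∀ i ≠ i₀, d i < d i₀)
    (h₀ : (p i₀).coeff (d i₀) ≠ 0) : odeg (∑ i, p i) = d i₀ := by
  classical
  refine odeg_eq_of_coeff ?_ fun j hj => ?_ <;> rw [AddMonoidAlgebra.coeff_sum, Finset.sum_apply']
  · rwa [Finset.sum_eq_single_of_mem i₀ (Finset.mem_univ _) fun i _ hi => hp i _ (hd i hi)]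
  · refine Finset.sum_eq_zero fun i _ => hp i j ?_
    rcases eq_or_ne i i₀ with rfl | hi
    exacts [hj, (hd i hi).trans hj]

lemma udeg_sum_eq (hp : ∀ i j, j < d i → (p i).coeff j = 0) (hd : ∀ i ≠ i₀, d i₀ < d i)
    (h₀ : (p i₀).coeff (d i₀) ≠ 0) : udeg (∑ i, p i) = d i₀ := by
  classical
  refine udeg_eq_of_coeff ?_ fun j hj => ?_ <;> rw [AddMonoidAlgebra.coeff_sum, Finset.sum_apply']
  · rwa [Finset.sum_eq_single_of_mem i₀ (Finset.mem_univ _) fun i _ hi => hp i _ (hd i hi)]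
  · refine Finset.sum_eq_zero fun i _ => hp i j ?_
    rcases eq_or_ne i i₀ with rfl | hi
    exacts [hj, hj.trans (hd i hi)]

end Sum

lemma coeff_mul_delta (p : LaurentPolynomial ℤ) (j : ℤ) :
    (p * δ).coeff j = -p.coeff (j - 2) - p.coeff (j + 2) := by
  rw [mul_sub, mul_neg, AddMonoidAlgebra.coeff_sub, AddMonoidAlgebra.coeff_neg, Finsupp.sub_apply,
    Finsupp.neg_apply, coeff_mul_T, coeff_mul_T, sub_neg_eq_add]

lemma coeff_delta_pow_of_lt : ∀ (k : ℕ) {j : ℤ}, 2 * (k : ℤ) < j → (δ ^ k).coeff j = 0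
  | 0, j, h => by rw [pow_zero, ← T_zero, T_apply, if_neg (by omega)]
  | k + 1, j, h => by
    rw [pow_succ, coeff_mul_delta, coeff_delta_pow_of_lt k (by omega),
      coeff_delta_pow_of_lt k (by omega), neg_zero, sub_zero]

lemma coeff_delta_pow_two_mul : ∀ k : ℕ, (δ ^ k).coeff (2 * (k : ℤ)) = (-1) ^ k
  | 0 => by rw [pow_zero, ← T_zero, T_apply, if_pos (by omega), pow_zero]
  | k + 1 => by
    rw [pow_succ, coeff_mul_delta, show 2 * ((k + 1 : ℕ) : ℤ) - 2 = 2 * k by omega,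
      coeff_delta_pow_two_mul k, coeff_delta_pow_of_lt k (by omega), pow_succ]
    ring

lemma invert_delta : invert δ = δ := by
  rw [map_sub, map_neg, invert_T, invert_T, neg_neg]
  abel

lemma coeff_delta_pow_neg (k : ℕ) (j : ℤ) : (δ ^ k).coeff (-j) = (δ ^ k).coeff j := by
  rw [← invert_apply, map_pow, invert_delta]

section Weight

variable {n : ℕ} (f : (Fin n → Bool) → ℕ) (s : Fin n → Bool)

lemma coeff_weight (j : ℤ) :
    (weight f s).coeff j = (δ ^ (f s - 1)).coeff (j - (alpha s - beta s)) :=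
  coeff_T_mul _ _ _

lemma coeff_weight_of_gt {j : ℤ} (h : alpha s - beta s + 2 * ((f s - 1 : ℕ) : ℤ) < j) :
    (weight f s).coeff j = 0 := by
  rw [coeff_weight]
  exact coeff_delta_pow_of_lt _ (by omega)

lemma coeff_weight_of_lt {j : ℤ} (h : j < alpha s - beta s - 2 * ((f s - 1 : ℕ) : ℤ)) :
    (weight f s).coeff j = 0 := by
  rw [coeff_weight, ← neg_neg (j - _), coeff_delta_pow_neg]
  exact coeff_delta_pow_of_lt _ (by omega)

lemma coeff_weight_top :
    (weight f s).coeff (alpha s - beta s + 2 * ((f s - 1 : ℕ) : ℤ)) = (-1) ^ (f s - 1) := by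
  rw [coeff_weight, add_sub_cancel_left, coeff_delta_pow_two_mul]

lemma coeff_weight_bot :
    (weight f s).coeff (alpha s - beta s - 2 * ((f s - 1 : ℕ) : ℤ)) = (-1) ^ (f s - 1) := by
  rw [coeff_weight, sub_sub_cancel_left, coeff_delta_pow_neg, coeff_delta_pow_two_mul]

end Weight

lemma hammingDist_update_add_one {ι : Type*} [Fintype ι] [DecidableEq ι] {β : ι → Type*}
    [∀ i, DecidableEq (β i)] {s t : ∀ i, β i} {i : ι} (hi : s i ≠ t i) :
    hammingDist (update s i (t i)) t + 1 = hammingDist s t := by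
  unfold hammingDist
  rw [← Finset.card_insert_of_notMem (a := i) (by simp)]
  congr 1
  ext j
  rcases eq_or_ne j i with rfl | hj <;> simp [*]

section States

variable {n : ℕ}

lemma alpha_add_beta (s : Fin n → Bool) : alpha s + beta s = n := by
  simpa [alpha, beta] using Finset.card_filter_add_card_filter_not (s := Finset.univ)
    fun i => s i = false

lemma alpha_eq_hammingDist (s : Fin n → Bool) : alpha s = hammingDist s fun _ => true := by
  simp [alpha, hammingDist]

lemma beta_eq_hammingDist (s : Fin n → Bool) : beta s = hammingDist s fun _ => false := by
  simp [beta, hammingDist]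

@[simp] lemma alpha_const_false : alpha (fun _ => false : Fin n → Bool) = n := by simp [alpha]
@[simp] lemma beta_const_false : beta (fun _ => false : Fin n → Bool) = 0 := by simp [beta]
@[simp] lemma alpha_const_true : alpha (fun _ => true : Fin n → Bool) = 0 := by simp [alpha]
@[simp] lemma beta_const_true : beta (fun _ => true : Fin n → Bool) = n := by simp [beta]

end States

namespace IsLoopCount

variable {n : ℕ} {f : (Fin n → Bool) → ℕ}

theorem add_one_le_add_hammingDist (hf : IsLoopCount f) {t : Fin n → Bool}
    (ht : ∀ i, f (update t i (!t i)) ≤ f t) {s : Fin n → Bool} (hs : s ≠ t) :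
    f s + 1 ≤ f t + hammingDist s t := by
  obtain ⟨k, hk⟩ : ∃ k, hammingDist s t = k := ⟨_, rfl⟩
  induction k generalizing s with
  | zero => exact absurd (hammingDist_eq_zero.1 hk) hs
  | succ k ih =>
    obtain ⟨i, hi⟩ := Function.ne_iff.1 hs
    set s' := update s i (t i)
    have hflip : update s' i (!s' i) = s := by
      funext j
      rcases eq_or_ne j i with rfl | hj
      · cases h : s j <;> cases h' : t j <;> simp_all [s']
      · simp [s', hj]
    have hlip : f s ≤ f s' + 1 := by
      have h := hf.2 s' i
      rw [hflip, abs_le] at h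
      omega
    have hdist : hammingDist s' t + 1 = hammingDist s t := hammingDist_update_add_one hi
    by_cases hs't : s' = t
    · have h : f s ≤ f t := by simpa only [← hs't, hflip] using ht i
      rw [hs't, hammingDist_self] at hdist
      omega
    · have h := ih hs't (by omega)
      omega

theorem odeg_bracket (hf : IsLoopCount f)
    (hA : ∀ i, f (update (fun _ => false) i true) ≤ f fun _ => false) :
    odeg (bracket f) = n + 2 * (f fun _ => false : ℤ) - 2 := by
  have hd : ∀ s ≠ (fun _ => false),
      alpha s - beta s + 2 * ((f s - 1 : ℕ) : ℤ) < n + 2 * ((f (fun _ => false) - 1 : ℕ) : ℤ) := by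
    intro s hs
    have h := hf.add_one_le_add_hammingDist hA hs
    have := alpha_add_beta s
    have := hf.1 s
    rw [← beta_eq_hammingDist] at h
    omega
  rw [bracket, odeg_sum_eq (weight f) _ (i₀ := fun _ => false) (fun s _ => coeff_weight_of_gt f s)
    (by simpa using hd) (by rw [coeff_weight_top]; exact pow_ne_zero _ (by norm_num))]
  have := hf.1 fun _ => false
  simp only [alpha_const_false, beta_const_false]
  omega

theorem udeg_bracket (hf : IsLoopCount f)
    (hB : ∀ i, f (update (fun _ => true) i false) ≤ f fun _ => true) :
    udeg (bracket f) = -n - 2 * (f fun _ => true : ℤ) + 2 := by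
  have hd : ∀ s ≠ (fun _ => true),
      -n - 2 * ((f (fun _ => true) - 1 : ℕ) : ℤ) < alpha s - beta s - 2 * ((f s - 1 : ℕ) : ℤ) := by
    intro s hs
    have h := hf.add_one_le_add_hammingDist hB hs
    have := alpha_add_beta s
    have := hf.1 s
    rw [← alpha_eq_hammingDist] at h
    omega
  rw [bracket, udeg_sum_eq (weight f) _ (i₀ := fun _ => true) (fun s _ => coeff_weight_of_lt f s)
    (by simpa using hd) (by rw [coeff_weight_bot]; exact pow_ne_zero _ (by norm_num))]
  have := hf.1 fun _ => true
  simp only [alpha_const_true, beta_const_true]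
  omega

theorem lspan_bracket (hf : IsLoopCount f)
    (hA : ∀ i, f (update (fun _ => false) i true) ≤ f fun _ => false)
    (hB : ∀ i, f (update (fun _ => true) i false) ≤ f fun _ => true) :
    lspan (bracket f) = 2 * n + 2 * (f fun _ => false : ℤ) + 2 * (f fun _ => true : ℤ) - 4 := by
  rw [lspan, hf.odeg_bracket hA, hf.udeg_bracket hB]
  ring

end IsLoopCount

/-- Abstract core of the properly-virtual criterion: if `f` (on `n` crossings)
and `f'` (on `n + 1` crossings) are pseudo-adequate loop-count functions with
`f'(s_A') = f(s_A) + 1` and `f'(s_B') = f(s_B) + 1`, then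
`span ⟨f'⟩ = span ⟨f⟩ + 6`; in particular the two spans are not both divisible by 4. -/
theorem lspan_bracket_virtualization {n : ℕ}
    (f : (Fin n → Bool) → ℕ) (f' : (Fin (n + 1) → Bool) → ℕ)
    (hf : IsLoopCount f) (hf' : IsLoopCount f')
    (hA : ∀ i : Fin n, f (Function.update (fun _ => false) i true) ≤ f (fun _ => false))
    (hB : ∀ i : Fin n, f (Function.update (fun _ => true) i false) ≤ f (fun _ => true))
    (hA' : ∀ i : Fin (n + 1),
      f' (Function.update (fun _ => false) i true) ≤ f' (fun _ => false))
    (hB' : ∀ i : Fin (n + 1),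
      f' (Function.update (fun _ => true) i false) ≤ f' (fun _ => true))
    (hsA : f' (fun _ => false) = f (fun _ => false) + 1)
    (hsB : f' (fun _ => true) = f (fun _ => true) + 1) :
    lspan (bracket f') = lspan (bracket f) + 6 ∧
    ¬ ((4 : ℤ) ∣ lspan (bracket f) ∧ (4 : ℤ) ∣ lspan (bracket f')) := by
  have hspan : lspan (bracket f') = lspan (bracket f) + 6 := by
    rw [hf.lspan_bracket hA hB, hf'.lspan_bracket hA' hB', hsA, hsB]
    push_cast
    ring
  exact ⟨hspan, fun ⟨h, h'⟩ => by omega⟩
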